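/- Under the outlier hypothesis testing model, if T_n < M_n/2, then for every ε > 0, the probability that the normalized coordinatewise median π̄ of the empirical types of the M_n observation sequences lies outside the ℓ∞-ball B_{ε,∞}(π) = {Q : |Q(y) − π(y)| ≤ ε for all y} is at most 2|Y|(M_n − T_n)exp(−2n(ε/(1+|Y|))²). -/

import Mathlib

open MeasureTheory ProbabilityTheory

noncomputable def medianList (l : List ℝ) : ℝ :=
  let s := l.insertionSort (· ≤ ·)
  if l.length % 2 = 1 then s.getD (l.length / 2) 0
  else (s.getD (l.length / 2 - 1) 0 + s.getD (l.length / 2) 0) / 2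

/-- Empirical type of a length-`n` sequence at symbol `y`. -/
noncomputable def empType {Y : Type*} [DecidableEq Y] (n : ℕ)
    (s : Fin n → Y) (y : Y) : ℝ :=
  (∑ ℓ, if s ℓ = y then (1 : ℝ) else 0) / n

/-- Coordinatewise median of the `M` empirical types. -/
noncomputable def medType {Y : Type*} [DecidableEq Y] (n M : ℕ)
    (samples : Fin M → Fin n → Y) (y : Y) : ℝ :=
  medianList (List.ofFn fun k => empType n (samples k) y)

/-- Normalized coordinatewise median. -/
noncomputable def medEst {Y : Type*} [Fintype Y] [DecidableEq Y] (n M : ℕ)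
    (samples : Fin M → Fin n → Y) (y : Y) : ℝ :=
  medType n M samples y / ∑ y', medType n M samples y'

/-! Hoeffding's inequality and a union bound over the `M - T` sequences drawn from `π` and the
symbols `y` show that, outside an event of probability at most `2|Y|(M - T)exp(-2nε'²)`, every
such sequence has all its empirical frequencies within `ε' = ε/(1+|Y|)` of `π`. On the complement,
for each symbol a strict majority of the `M` empirical frequencies lies in
`[π y - ε', π y + ε']`, hence so does their median; the medians then sum to within `|Y|ε'` of `1`,
and normalizing them moves each coordinate by at most `(1 + |Y|)ε' = ε`. -/

namespace List

section Sorted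

variable {α : Type*} [LinearOrder α] {s : List α}

theorem SortedLE.le_getElem_of_countP_lt_le (hs : s.SortedLE) {i : ℕ} (hi : i < s.length)
    {a : α} (h : s.countP (· < a) ≤ i) : a ≤ s[i] := by
  by_contra! hlt
  have hprefix : (s.take (i + 1)).countP (· < a) = i + 1 := by
    rw [countP_eq_length.mpr, length_take, min_eq_left hi]
    intro x hx
    obtain ⟨j, hj, rfl⟩ := mem_take_iff_getElem.mp hx
    exact decide_eq_true <|
      (sortedLE_iff_getElem_le_getElem_of_le.mp hs (by omega : j ≤ i)).trans_lt hlt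
  have := (take_sublist (i + 1) s).countP_le (p := (· < a))
  omega

theorem SortedLE.getElem_le_of_countP_gt_add_lt (hs : s.SortedLE) {i : ℕ} (hi : i < s.length)
    {b : α} (h : s.countP (b < ·) + i < s.length) : s[i] ≤ b := by
  by_contra! hlt
  have hsuffix : (s.drop i).countP (b < ·) = s.length - i := by
    rw [countP_eq_length.mpr, length_drop]
    intro x hx
    obtain ⟨j, hj, rfl⟩ := mem_iff_getElem.mp hx
    rw [getElem_drop]
    exact decide_eq_true <|
      hlt.trans_le (sortedLE_iff_getElem_le_getElem_of_le.mp hs (by omega : i ≤ i + j))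
  have := (drop_sublist i s).countP_le (p := (b < ·))
  omega

end Sorted

theorem countP_add_countP_le_length {β : Type*} {l : List β} {p q : β → Bool}
    (hpq : ∀ x, p x → ¬q x) : l.countP p + l.countP q ≤ l.length := by
  rw [length_eq_countP_add_countP q (l := l), add_comm]
  gcongr
  exact countP_mono_left fun x _ hx => by simpa using hpq x hx

end List

theorem Fin.card_filter_le_val (M T : ℕ) :
    (Finset.univ.filter fun k : Fin M => T ≤ (k : ℕ)).card = M - T := by
  have := Finset.card_filter_add_card_filter_not (s := Finset.univ) (fun k : Fin M => (k : ℕ) < T)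
  simp only [Fin.card_filter_val_lt, not_lt, Finset.card_univ, Fintype.card_fin] at this
  omega

theorem medianList_mem_Icc {l : List ℝ} {a b : ℝ}
    (h : l.length < 2 * l.countP (fun x => a ≤ x ∧ x ≤ b)) : medianList l ∈ Set.Icc a b := by
  set s := l.insertionSort (· ≤ ·) with hs_def
  have hsorted : s.SortedLE := List.sortedLE_insertionSort
  have hperm : s.Perm l := List.perm_insertionSort _ l
  rw [← hperm.countP_eq, ← hperm.length_eq] at h
  have hlow := s.countP_add_countP_le_length (p := (· < a)) (q := fun x => a ≤ x ∧ x ≤ b)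
    (by simp +contextual [not_le_of_gt])
  have hhigh := s.countP_add_countP_le_length (p := (b < ·)) (q := fun x => a ≤ x ∧ x ≤ b)
    (by simp +contextual [not_le_of_gt])
  set G := s.countP (fun x => a ≤ x ∧ x ≤ b)
  have hmid : ∀ i (hi : i < s.length), s.length ≤ i + G → i < G →
      s.getD i 0 ∈ Set.Icc a b := fun i hi h₁ h₂ => by
    rw [List.getD_eq_getElem _ _ hi]
    exact ⟨hsorted.le_getElem_of_countP_lt_le hi (by omega),
      hsorted.getElem_le_of_countP_gt_add_lt hi (by omega)⟩
  unfold medianList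
  rw [← hs_def, ← hperm.length_eq]
  split_ifs with hodd
  · exact hmid _ (by omega) (by omega) (by omega)
  · have h₁ := hmid (s.length / 2 - 1) (by omega) (by omega) (by omega)
    have h₂ := hmid (s.length / 2) (by omega) (by omega) (by omega)
    constructor <;> linarith [h₁.1, h₁.2, h₂.1, h₂.2]

theorem medianList_ofFn_mem_Icc {M : ℕ} {f : Fin M → ℝ} {S : Finset (Fin M)} {a b : ℝ}
    (hS : M < 2 * S.card) (hf : ∀ k ∈ S, f k ∈ Set.Icc a b) :
    medianList (List.ofFn f) ∈ Set.Icc a b := by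
  refine medianList_mem_Icc ?_
  have hcount : S.card ≤ (List.ofFn f).countP (fun x => a ≤ x ∧ x ≤ b) := by
    rw [← Multiset.coe_countP, ← Fin.univ_val_map, Multiset.countP_map]
    exact Finset.card_le_card (t := Finset.univ.filter fun k => a ≤ f k ∧ f k ≤ b)
      fun k hk => by simpa using hf k hk
  rw [List.length_ofFn]
  omega

theorem abs_div_sum_sub_le_of_abs_sub_le {ι : Type*} [Fintype ι] {m p : ι → ℝ} {δ : ℝ}
    (hm : ∀ i, 0 ≤ m i) (hp : ∀ i, 0 ≤ p i) (hp1 : ∑ i, p i = 1)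
    (h : ∀ i, |m i - p i| ≤ δ) (i : ι) :
    |m i / ∑ j, m j - p i| ≤ (1 + Fintype.card ι) * δ := by
  set s := ∑ j, m j
  set c : ℝ := (Fintype.card ι : ℝ)
  have hδ : 0 ≤ δ := (abs_nonneg _).trans (h i)
  have hc : 0 ≤ c := Nat.cast_nonneg _
  have hs : |s - 1| ≤ c * δ :=
    calc |s - 1| = |∑ j, (m j - p j)| := by rw [Finset.sum_sub_distrib, hp1]
    _ ≤ ∑ j, |m j - p j| := Finset.abs_sum_le_sum_abs _ _
    _ ≤ ∑ _j : ι, δ := Finset.sum_le_sum fun j _ => h j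
    _ = c * δ := by simp [c]
  obtain ⟨hs_lo, hs_hi⟩ := abs_le.mp hs
  have hmi : m i ≤ s := Finset.single_le_sum (fun j _ => hm j) (Finset.mem_univ i)
  have hpi : p i ≤ 1 := hp1 ▸ Finset.single_le_sum (fun j _ => hp j) (Finset.mem_univ i)
  obtain ⟨hlo, hhi⟩ := abs_le.mp (h i)
  rcases (show 0 ≤ s from Finset.sum_nonneg fun j _ => hm j).eq_or_lt with hs0 | hspos
  · rw [← hs0, div_zero, zero_sub, abs_neg, abs_of_nonneg (hp i)]
    have : m i = 0 := le_antisymm (hs0 ▸ hmi) (hm i)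
    nlinarith
  rw [abs_le]
  constructor
  · rcases le_or_gt (p i) ((1 + c) * δ) with hsmall | hbig
    · linarith [div_nonneg (hm i) hspos.le]
    · have : (p i - (1 + c) * δ) * s ≤ m i := by nlinarith
      linarith [(le_div_iff₀ hspos).mpr this]
  · rcases le_or_gt 1 (p i + (1 + c) * δ) with hbig | hsmall
    · linarith [(div_le_one hspos).mpr hmi]
    · have : m i ≤ (p i + (1 + c) * δ) * s := by
        nlinarith [mul_le_mul_of_nonneg_left hs_lo (by nlinarith [hp i] : 0 ≤ p i + (1 + c) * δ),
          mul_nonneg (mul_nonneg hc hδ) (by linarith : 0 ≤ 1 - (p i + (1 + c) * δ))]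
      linarith [(div_le_iff₀ hspos).mpr this]

theorem measureReal_le_abs_sum_sub_integral_le {Ω : Type*} [MeasurableSpace Ω] {μ : Measure Ω}
    [IsProbabilityMeasure μ] {ι : Type*} [Fintype ι] {X : ι → Ω → ℝ} (hind : iIndepFun X μ)
    (hm : ∀ i, AEMeasurable (X i) μ) (hb : ∀ i, ∀ᵐ ω ∂μ, X i ω ∈ Set.Icc 0 1)
    {δ : ℝ} (hδ : 0 ≤ δ) :
    μ.real {ω | Fintype.card ι * δ ≤ |∑ i, (X i ω - μ[X i])|} ≤
      2 * Real.exp (-2 * Fintype.card ι * δ ^ 2) := by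
  set n : ℝ := (Fintype.card ι : ℝ)
  have hsum : HasSubgaussianMGF (fun ω => ∑ i, (X i ω - μ[X i]))
      (∑ _i : ι, (‖(1 : ℝ) - 0‖₊ / 2) ^ 2) μ :=
    have hcentered : iIndepFun (fun i ω => X i ω - μ[X i]) μ :=
      hind.comp (fun i (x : ℝ) => x - ∫ ω, X i ω ∂μ) fun i => measurable_id.sub_const _
    HasSubgaussianMGF.sum_of_iIndepFun hcentered
      fun i _ => hasSubgaussianMGF_of_mem_Icc (hm i) (hb i)
  have hexp : -(n * δ) ^ 2 / (2 * ((∑ _i : ι, (‖(1 : ℝ) - 0‖₊ / 2) ^ 2 : NNReal) : ℝ)) =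
      -2 * n * δ ^ 2 := by
    rcases (Nat.cast_nonneg (Fintype.card ι) : (0 : ℝ) ≤ n).eq_or_lt with hn | hn
    · simp [n, ← hn]
    · simp [n]
      field_simp
  have hupper := hsum.measure_ge_le (ε := n * δ) (by positivity)
  have hlower := hsum.neg.measure_ge_le (ε := n * δ) (by positivity)
  rw [hexp] at hupper hlower
  calc μ.real {ω | n * δ ≤ |∑ i, (X i ω - μ[X i])|}
      ≤ μ.real ({ω | n * δ ≤ ∑ i, (X i ω - μ[X i])} ∪
          {ω | n * δ ≤ (-fun ω => ∑ i, (X i ω - μ[X i])) ω}) :=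
        measureReal_mono fun ω (hω : n * δ ≤ |_|) => le_abs.mp hω
    _ ≤ _ := measureReal_union_le _ _
    _ ≤ 2 * Real.exp (-2 * n * δ ^ 2) := by linarith

theorem empType_nonneg {Y : Type*} [DecidableEq Y] (n : ℕ) (s : Fin n → Y) (y : Y) :
    0 ≤ empType n s y :=
  div_nonneg (Finset.sum_nonneg fun _ _ => by split_ifs <;> norm_num) n.cast_nonneg

theorem natCast_mul_empType {Y : Type*} [DecidableEq Y] (n : ℕ) (s : Fin n → Y) (y : Y) :
    n * empType n s y = ∑ ℓ, if s ℓ = y then (1 : ℝ) else 0 := by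
  rcases n.eq_zero_or_pos with rfl | hn
  · simp
  · exact mul_div_cancel₀ _ (by positivity)

theorem measure_lt_abs_empType_sub_le {Ω : Type*} [MeasurableSpace Ω] {Pr : Measure Ω}
    [IsProbabilityMeasure Pr] {Y : Type*} [DecidableEq Y] [MeasurableSpace Y]
    [MeasurableSingletonClass Y] {n : ℕ} {ξ : Fin n → Ω → Y} (hmeas : ∀ ℓ, Measurable (ξ ℓ))
    (hind : iIndepFun ξ Pr) {y : Y} {q : ℝ} (hq : 0 ≤ q)
    (hlaw : ∀ ℓ, Pr {ω | ξ ℓ ω = y} = ENNReal.ofReal q) {δ : ℝ} (hδ : 0 ≤ δ) :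
    Pr {ω | δ < |empType n (fun ℓ => ξ ℓ ω) y - q|} ≤
      ENNReal.ofReal (2 * Real.exp (-2 * n * δ ^ 2)) := by
  have hset : ∀ ℓ, MeasurableSet {ω | ξ ℓ ω = y} := fun ℓ => hmeas ℓ (measurableSet_singleton y)
  set Z : Fin n → Ω → ℝ := fun ℓ ω => if ξ ℓ ω = y then 1 else 0
  have hZ : ∀ ℓ, Z ℓ = {ω | ξ ℓ ω = y}.indicator 1 := fun ℓ => by
    ext ω; simp [Z, Set.indicator]
  have hZmean : ∀ ℓ, Pr[Z ℓ] = q := fun ℓ => by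
    rw [hZ, integral_indicator_one (hset ℓ), measureReal_def,
      hlaw, ENNReal.toReal_ofReal hq]
  have hZind : iIndepFun Z Pr :=
    hind.comp (fun _ a => if a = y then (1 : ℝ) else 0)
      fun _ => Measurable.ite (measurableSet_singleton y) measurable_const measurable_const
  have hhoeffding := measureReal_le_abs_sum_sub_integral_le hZind
    (fun ℓ => (hZ ℓ ▸ measurable_const.indicator (hset ℓ)).aemeasurable)
    (fun ℓ => ae_of_all _ fun ω => by by_cases h : ξ ℓ ω = y <;> simp [Z, h]) hδ
  simp only [hZmean, Fintype.card_fin] at hhoeffding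
  refine (measure_mono fun ω (hω : δ < _) => ?_).trans <|
    (ofReal_measureReal (measure_ne_top _ _)).symm.trans_le (ENNReal.ofReal_le_ofReal hhoeffding)
  show n * δ ≤ |∑ ℓ, (Z ℓ ω - q)|
  rw [Finset.sum_sub_distrib, ← natCast_mul_empType, Finset.sum_const, Finset.card_univ,
    Fintype.card_fin, nsmul_eq_mul, ← mul_sub, abs_mul, Nat.abs_cast]
  gcongr

theorem medType_mem_Icc {Y : Type*} [DecidableEq Y] {n M : ℕ} {samples : Fin M → Fin n → Y}
    {S : Finset (Fin M)} (hS : M < 2 * S.card) {y : Y} {q δ : ℝ}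
    (h : ∀ k ∈ S, |empType n (samples k) y - q| ≤ δ) :
    medType n M samples y ∈ Set.Icc (max 0 (q - δ)) (q + δ) :=
  medianList_ofFn_mem_Icc hS fun k hk =>
    ⟨max_le (empType_nonneg _ _ _) (by linarith [(abs_le.mp (h k hk)).1]),
      by linarith [(abs_le.mp (h k hk)).2]⟩

theorem abs_medEst_sub_le {Y : Type*} [Fintype Y] [DecidableEq Y] {n M : ℕ}
    {samples : Fin M → Fin n → Y} {S : Finset (Fin M)} (hS : M < 2 * S.card) {p : Y → ℝ}
    (hp : ∀ y, 0 ≤ p y) (hp1 : ∑ y, p y = 1) {δ : ℝ}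
    (h : ∀ k ∈ S, ∀ y, |empType n (samples k) y - p y| ≤ δ) (y : Y) :
    |medEst n M samples y - p y| ≤ (1 + Fintype.card Y) * δ := by
  have hmed := fun y => medType_mem_Icc hS (q := p y) (δ := δ) (h · · y)
  refine abs_div_sum_sub_le_of_abs_sub_le (fun y => (le_max_left _ _).trans (hmed y).1) hp hp1
    (fun y => abs_le.mpr ⟨?_, ?_⟩) y
  · linarith [le_max_right 0 (p y - δ), (hmed y).1]
  · linarith [(hmed y).2]

theorem median_estimate_concentration_general
    {Ω : Type*} [MeasurableSpace Ω] (Pr : Measure Ω) [IsProbabilityMeasure Pr]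
    {Y : Type*} [Fintype Y] [DecidableEq Y] [MeasurableSpace Y]
    [MeasurableSingletonClass Y]
    (π : Y → ℝ)
    (hπ0 : ∀ y, 0 ≤ π y) (hπ1 : ∑ y, π y = 1)
    (n M T : ℕ) (hTM : 2 * T < M)
    (X : Fin M × Fin n → Ω → Y) (hmeas : ∀ p, Measurable (X p))
    (hindep : iIndepFun X Pr)
    (hlawπ : ∀ (k : Fin M) (ℓ : Fin n) (y : Y), T ≤ (k : ℕ) →
      Pr {ω | X (k, ℓ) ω = y} = ENNReal.ofReal (π y))
    (ε : ℝ) (hε : 0 < ε) :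
    Pr {ω | ∃ y : Y, ε < |medEst n M (fun k ℓ => X (k, ℓ) ω) y - π y|} ≤
      ENNReal.ofReal (2 * (Fintype.card Y : ℝ) * ((M : ℝ) - T) *
        Real.exp (-2 * n * (ε / (1 + (Fintype.card Y : ℝ))) ^ 2)) := by
  set ε' := ε / (1 + (Fintype.card Y : ℝ))
  have hε' : (1 + (Fintype.card Y : ℝ)) * ε' = ε := mul_div_cancel₀ _ (by positivity)
  set S := Finset.univ.filter fun k : Fin M => T ≤ (k : ℕ)
  have hS_card : S.card = M - T := Fin.card_filter_le_val M T
  have hsub : {ω | ∃ y : Y, ε < |medEst n M (fun k ℓ => X (k, ℓ) ω) y - π y|} ⊆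
      ⋃ k ∈ S, ⋃ y, {ω | ε' < |empType n (fun ℓ => X (k, ℓ) ω) y - π y|} := by
    rintro ω ⟨y, hy⟩
    by_contra hω
    simp only [Set.mem_iUnion, Set.mem_ofPred_eq, not_exists, not_lt] at hω
    have := abs_medEst_sub_le (by omega) hπ0 hπ1 (fun k hk y => hω k hk y) y
    linarith
  have hbound : ∀ k ∈ S, ∀ y, Pr {ω | ε' < |empType n (fun ℓ => X (k, ℓ) ω) y - π y|} ≤
      ENNReal.ofReal (2 * Real.exp (-2 * n * ε' ^ 2)) := fun k hk y =>
    measure_lt_abs_empType_sub_le (fun ℓ => hmeas _) (hindep.precomp (Prod.mk_right_injective k))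
      (hπ0 y) (fun ℓ => hlawπ k ℓ y (Finset.mem_filter.mp hk).2) (by positivity)
  calc _ ≤ _ := measure_mono hsub
    _ ≤ ∑ k ∈ S, ∑ y, Pr {ω | ε' < |empType n (fun ℓ => X (k, ℓ) ω) y - π y|} :=
      (measure_biUnion_finset_le _ _).trans
        (Finset.sum_le_sum fun k _ => measure_iUnion_fintype_le _ _)
    _ ≤ ∑ k ∈ S, ∑ _y : Y, ENNReal.ofReal (2 * Real.exp (-2 * n * ε' ^ 2)) :=
      Finset.sum_le_sum fun k hk => Finset.sum_le_sum fun y _ => hbound k hk y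
    _ = _ := by
      simp only [Finset.sum_const, Finset.card_univ, nsmul_eq_mul, hS_card]
      rw [← ENNReal.ofReal_natCast, ← ENNReal.ofReal_natCast (Fintype.card Y),
        ← ENNReal.ofReal_mul (by positivity), ← ENNReal.ofReal_mul (by positivity),
        Nat.cast_sub (by omega)]
      ring_nf

/-- Under the outlier model with `T_n < M_n/2`, the normalized coordinatewise
median `π̄` of the empirical types lies outside the `ℓ∞`-ball `B_{ε,∞}(π)` with
probability at most `2|Y|(M−T)exp(−2n(ε/(1+|Y|))²)`. -/
theorem median_estimate_concentration
    {Ω : Type*} [MeasurableSpace Ω] (Pr : Measure Ω) [IsProbabilityMeasure Pr]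
    {Y : Type*} [Fintype Y] [Nonempty Y] [DecidableEq Y] [MeasurableSpace Y]
    [MeasurableSingletonClass Y]
    (π μ : Y → ℝ)
    (hπ0 : ∀ y, 0 ≤ π y) (hπ1 : ∑ y, π y = 1)
    (hμ0 : ∀ y, 0 ≤ μ y) (hμ1 : ∑ y, μ y = 1) (hπμ : π ≠ μ)
    (n M T : ℕ) (hn : 0 < n) (hTM : 2 * T < M)
    (X : Fin M × Fin n → Ω → Y) (hmeas : ∀ p, Measurable (X p))
    (hindep : iIndepFun X Pr)
    (hlawμ : ∀ (k : Fin M) (ℓ : Fin n) (y : Y), (k : ℕ) < T →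
      Pr {ω | X (k, ℓ) ω = y} = ENNReal.ofReal (μ y))
    (hlawπ : ∀ (k : Fin M) (ℓ : Fin n) (y : Y), T ≤ (k : ℕ) →
      Pr {ω | X (k, ℓ) ω = y} = ENNReal.ofReal (π y))
    (ε : ℝ) (hε : 0 < ε) :
    Pr {ω | ∃ y : Y, ε < |medEst n M (fun k ℓ => X (k, ℓ) ω) y - π y|} ≤
      ENNReal.ofReal (2 * (Fintype.card Y : ℝ) * ((M : ℝ) - T) *
        Real.exp (-2 * n * (ε / (1 + (Fintype.card Y : ℝ))) ^ 2)) :=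
  median_estimate_concentration_general Pr π hπ0 hπ1 n M T hTM X hmeas hindep hlawπ ε hε
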